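/- Let (X, ‖·|) be a biBanach asymmetric normed space. Then X, equipped with the topology induced by the asymmetric norm, is a Baire space if and only if the asymmetric norm is equivalent to the associated norm, i.e. there exists a constant c > 0 such that c·‖x‖_s ≤ ‖x| ≤ ‖x‖_s for all x ∈ X (equivalently, (X,‖·|) is isomorphic to its associated normed space). -/

import Mathlib

/-!
If the topology of the asymmetric norm `p` is Baire, then by the Baire category theorem one of
the closed sets `{x | p (-x) ≤ n}` contains a `p`-ball, and translating and rescaling that ball
gives `p (-x) ≤ K * p x` for all `x`, whence `‖x‖ = max (p x) (p (-x)) ≤ (1 + K) * p x`.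
Conversely, if `p` is equivalent to the norm, the `p`-balls generate the norm topology, which is
Baire because `X` is complete.
-/

open Set TopologicalSpace Topology

namespace AsymmetricNorm

section AddCommGroup

variable {X : Type*} [AddCommGroup X] {p : X → ℝ}

def ball (p : X → ℝ) (x : X) (r : ℝ) : Set X := {y | p (y - x) < r}

abbrev ballTopology (p : X → ℝ) : TopologicalSpace X :=
  generateFrom {s | ∃ x r, 0 < r ∧ s = ball p x r}

lemma mem_ball_self (hp : p 0 = 0) {r : ℝ} (hr : 0 < r) (x : X) : x ∈ ball p x r := by
  simpa [ball, hp] using hr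

lemma ball_subset_ball {x : X} {r s : ℝ} (hrs : r ≤ s) : ball p x r ⊆ ball p x s :=
  fun _ hy => lt_of_lt_of_le hy hrs

lemma ball_subset_ball_sub (hpt : ∀ x y, p (x + y) ≤ p x + p y) (x y : X) (r : ℝ) :
    ball p y (r - p (y - x)) ⊆ ball p x r := by
  intro z hz
  have htri := hpt (z - y) (y - x)
  rw [sub_add_sub_cancel] at htri
  simp only [ball, mem_ofPred_eq] at hz ⊢
  linarith

lemma isTopologicalBasis_balls (hpt : ∀ x y, p (x + y) ≤ p x + p y) (hp : p 0 = 0) :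
    @IsTopologicalBasis X (ballTopology p) {s | ∃ x r, 0 < r ∧ s = ball p x r} := by
  let := ballTopology p
  refine ⟨?_, ?_, rfl⟩
  · rintro _ ⟨x₁, r₁, -, rfl⟩ _ ⟨x₂, r₂, -, rfl⟩ y ⟨hy₁, hy₂⟩
    have hr : 0 < min (r₁ - p (y - x₁)) (r₂ - p (y - x₂)) :=
      lt_min (sub_pos.2 hy₁) (sub_pos.2 hy₂)
    refine ⟨_, ⟨y, _, hr, rfl⟩, mem_ball_self hp hr y, subset_inter ?_ ?_⟩
    · exact (ball_subset_ball (min_le_left _ _)).trans (ball_subset_ball_sub hpt x₁ y r₁)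
    · exact (ball_subset_ball (min_le_right _ _)).trans (ball_subset_ball_sub hpt x₂ y r₂)
  · exact sUnion_eq_univ_iff.2 fun x => ⟨_, ⟨x, 1, one_pos, rfl⟩, mem_ball_self hp one_pos x⟩

lemma isOpen_ballTopology_iff (hpt : ∀ x y, p (x + y) ≤ p x + p y) (hp : p 0 = 0) {U : Set X} :
    IsOpen[ballTopology p] U ↔ ∀ y ∈ U, ∃ r > 0, ball p y r ⊆ U := by
  let := ballTopology p
  rw [(isTopologicalBasis_balls hpt hp).isOpen_iff]
  refine forall₂_congr fun y _ => ⟨?_, ?_⟩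
  · rintro ⟨_, ⟨x, r, -, rfl⟩, hy, hsub⟩
    exact ⟨_, sub_pos.2 hy, (ball_subset_ball_sub hpt x y r).trans hsub⟩
  · rintro ⟨r, hr, hsub⟩
    exact ⟨_, ⟨y, r, hr, rfl⟩, mem_ball_self hp hr y, hsub⟩

lemma isClosed_setOf_apply_neg_le (hpt : ∀ x y, p (x + y) ≤ p x + p y) (hp : p 0 = 0) (a : ℝ) :
    IsClosed[ballTopology p] {x | p (-x) ≤ a} := by
  let := ballTopology p
  rw [← isOpen_compl_iff, isOpen_ballTopology_iff hpt hp]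
  intro y hy
  simp only [mem_compl_iff, mem_ofPred_eq, not_le] at hy
  refine ⟨p (-y) - a, sub_pos.2 hy, fun z hz => ?_⟩
  have htri := hpt (-z) (z - y)
  rw [show -z + (z - y) = -y by abel] at htri
  simp only [ball, mem_compl_iff, mem_ofPred_eq, not_le] at hz ⊢
  linarith

end AddCommGroup

section Module

variable {X : Type*} [AddCommGroup X] [Module ℝ X] {p : X → ℝ}

lemma exists_bound_apply_neg_of_baireSpace (hp0 : ∀ x, 0 ≤ p x)
    (hph : ∀ c : ℝ, 0 ≤ c → ∀ x, p (c • x) = c * p x) (hpt : ∀ x y, p (x + y) ≤ p x + p y)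
    (hB : @BaireSpace X (ballTopology p)) :
    ∃ r > 0, ∃ M > 0, ∀ z, p z < r → p (-z) ≤ M := by
  let := ballTopology p
  have hp : p 0 = 0 := by simpa using hph 0 le_rfl 0
  obtain ⟨n, x₀, hx₀⟩ := nonempty_interior_of_iUnion_of_closed
    (fun n : ℕ => isClosed_setOf_apply_neg_le hpt hp n)
    (iUnion_eq_univ_iff.2 fun x => exists_nat_ge (p (-x)))
  obtain ⟨r, hr, hsub⟩ := (isOpen_ballTopology_iff hpt hp).1 isOpen_interior x₀ hx₀
  refine ⟨r, hr, n + p x₀ + 1, by linarith [hp0 x₀, n.cast_nonneg (α := ℝ)], fun z hz => ?_⟩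
  have hmem : p (-(x₀ + z)) ≤ n :=
    interior_subset (s := {x | p (-x) ≤ n})
      (hsub (show x₀ + z ∈ ball p x₀ r by simpa [ball] using hz))
  have htri := hpt (-(x₀ + z)) x₀
  rw [show -(x₀ + z) + x₀ = -z by abel] at htri
  linarith

lemma mul_apply_neg_le_of_bound (hp0 : ∀ x, 0 ≤ p x)
    (hph : ∀ c : ℝ, 0 ≤ c → ∀ x, p (c • x) = c * p x) {r M : ℝ} (hr : 0 < r) (hM : 0 < M)
    (hbound : ∀ z, p z < r → p (-z) ≤ M) (z : X) : r * p (-z) ≤ M * p z := by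
  refine le_of_forall_pos_le_add fun ε hε => ?_
  set s := p z + ε / M
  have hs : 0 < s := by have := hp0 z; positivity
  have ht : 0 ≤ r / s := by positivity
  have hlt : p ((r / s) • z) < r := by
    rw [hph _ ht, div_mul_eq_mul_div, div_lt_iff₀ hs]
    exact mul_lt_mul_of_pos_left (lt_add_of_pos_right _ (by positivity)) hr
  have hle := hbound _ hlt
  rw [← smul_neg, hph _ ht, div_mul_eq_mul_div, div_le_iff₀ hs] at hle
  calc r * p (-z) ≤ M * s := hle
    _ = M * p z + ε := by simp only [s]; field_simp

end Module

lemma ballTopology_eq_of_equiv_norm {X : Type*} [SeminormedAddCommGroup X] {p : X → ℝ}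
    (hpt : ∀ x y, p (x + y) ≤ p x + p y) {c : ℝ} (hc : 0 < c)
    (hequiv : ∀ x : X, c * ‖x‖ ≤ p x ∧ p x ≤ ‖x‖) :
    ballTopology p = (inferInstance : TopologicalSpace X) := by
  have hp : p 0 = 0 := le_antisymm (by simpa using (hequiv 0).2) (by simpa using (hequiv 0).1)
  ext U
  rw [isOpen_ballTopology_iff hpt hp, Metric.isOpen_iff]
  refine forall₂_congr fun y _ => ⟨?_, ?_⟩
  · rintro ⟨r, hr, hsub⟩
    refine ⟨r, hr, fun z hz => hsub ?_⟩
    rw [Metric.mem_ball, dist_eq_norm] at hz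
    exact lt_of_le_of_lt (hequiv (z - y)).2 hz
  · rintro ⟨ε, hε, hsub⟩
    refine ⟨c * ε, mul_pos hc hε, fun z hz => hsub ?_⟩
    rw [Metric.mem_ball, dist_eq_norm]
    exact lt_of_mul_lt_mul_left (lt_of_le_of_lt (hequiv (z - y)).1 hz) hc.le

end AsymmetricNorm

open AsymmetricNorm in
theorem stmt_6_general {X : Type*} [NormedAddCommGroup X] [NormedSpace ℝ X] [CompleteSpace X]
    (p : X → ℝ)
    (hp0 : ∀ x, 0 ≤ p x)
    (hph : ∀ c : ℝ, 0 ≤ c → ∀ x, p (c • x) = c * p x)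
    (hpt : ∀ x y, p (x + y) ≤ p x + p y)
    (hs : ∀ x : X, max (p x) (p (-x)) = ‖x‖) :
    @BaireSpace X (TopologicalSpace.generateFrom
        {s : Set X | ∃ x : X, ∃ r : ℝ, 0 < r ∧ s = {y : X | p (y - x) < r}})
      ↔ ∃ c : ℝ, 0 < c ∧ ∀ x : X, c * ‖x‖ ≤ p x ∧ p x ≤ ‖x‖ := by
  change @BaireSpace X (ballTopology p) ↔ _
  constructor
  · intro hB
    obtain ⟨r, hr, M, hM, hbound⟩ := exists_bound_apply_neg_of_baireSpace hp0 hph hpt hB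
    refine ⟨r / (r + M), by positivity, fun x => ⟨?_, hs x ▸ le_max_left _ _⟩⟩
    have hnorm : r * ‖x‖ ≤ (r + M) * p x := by
      rw [← hs x, mul_max_of_nonneg _ _ hr.le]
      have := mul_apply_neg_le_of_bound hp0 hph hr hM hbound x
      exact max_le (by nlinarith [hp0 x]) (by nlinarith [hp0 x])
    rw [div_mul_eq_mul_div, div_le_iff₀ (by positivity)]
    linarith
  · rintro ⟨c, hc, hequiv⟩
    rw [ballTopology_eq_of_equiv_norm hpt hc hequiv]
    infer_instance

/-- Let `(X, ‖·|)` be a biBanach asymmetric normed space, encoded as a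
real Banach space `X` whose norm is the associated norm: `max (p x) (p (-x)) = ‖x‖`.
Then `X` with the topology induced by the asymmetric norm is a Baire space if and
only if the asymmetric norm is equivalent to the associated norm, i.e. there is a
constant `c > 0` with `c * ‖x‖ ≤ p x ≤ ‖x‖` for all `x`. -/
theorem stmt_6 {X : Type*} [NormedAddCommGroup X] [NormedSpace ℝ X] [CompleteSpace X]
    (p : X → ℝ)
    (hp0 : ∀ x, 0 ≤ p x)
    (hph : ∀ c : ℝ, 0 ≤ c → ∀ x, p (c • x) = c * p x)
    (hpt : ∀ x y, p (x + y) ≤ p x + p y)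
    (hps : ∀ x, (p x = 0 ∧ p (-x) = 0) ↔ x = 0)
    (hs : ∀ x : X, max (p x) (p (-x)) = ‖x‖) :
    @BaireSpace X (TopologicalSpace.generateFrom
        {s : Set X | ∃ x : X, ∃ r : ℝ, 0 < r ∧ s = {y : X | p (y - x) < r}})
      ↔ ∃ c : ℝ, 0 < c ∧ ∀ x : X, c * ‖x‖ ≤ p x ∧ p x ≤ ‖x‖ :=
  stmt_6_general p hp0 hph hpt hs
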